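/- arXiv:1411.2370 — 3 statements merged into one kernel-verified Lean document; each statement's English description precedes it below -/
import Mathlib

section
/- Let G be a connected graph, V_i a nonempty finite vertex set, and S = {s_1, ..., s_k} ⊆ V. Partition V_i into Voronoi sets M_1, ..., M_k where each u ∈ M_j satisfies d(s_j, u) = min_{i} d(s_i, u). Let s'_j be a Jordan center of M_j (a vertex minimizing max_{z ∈ M_j} d(·, z)), and S' = {s'_1, ..., s'_k}. Then d̄(S', V_i) ≤ d̄(S, V_i), where d̄(S, V_i) = max_{u ∈ V_i} min_{s ∈ S} d(s, u). -/
/-- The infection range d̄(S, V_i) = max_{u ∈ V_i} min_i d(s_i, u). -/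
noncomputable def sourceSetRange {V : Type*} (G : SimpleGraph V) (Vi : Finset V)
    {k : ℕ} (hk : 0 < k) (S : Fin k → V) : ℕ :=
  Vi.sup fun u =>
    Finset.univ.inf' (Finset.univ_nonempty_iff.mpr ⟨⟨0, hk⟩⟩)
      (fun i => G.dist (S i) u)

/-- Proposition 4: one iteration of the MJC algorithm (Voronoi
partition of V_i with respect to S = {s_1,…,s_k}, then replacing each s_j by a
Jordan center s'_j of its Voronoi set M_j) does not increase the infection
range. -/
theorem mjc_range_non_increasing {V : Type*} (G : SimpleGraph V)
    (hG : G.Connected) (Vi : Finset V) (hVi : Vi.Nonempty)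
    {k : ℕ} (hk : 0 < k) (s s' : Fin k → V) (M : Fin k → Finset V)
    (hcover : ∀ u ∈ Vi, ∃ j, u ∈ M j)
    (hVoronoi : ∀ j, ∀ u ∈ M j, u ∈ Vi ∧ ∀ i, G.dist (s j) u ≤ G.dist (s i) u)
    (hJordan : ∀ j, ∀ w : V,
      (M j).sup (fun z => G.dist (s' j) z) ≤ (M j).sup (fun z => G.dist w z)) :
    sourceSetRange G Vi hk s' ≤ sourceSetRange G Vi hk s := by
  unfold sourceSetRange
  apply Finset.sup_le
  intro u hu
  obtain ⟨j, hj⟩ := hcover u hu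
  calc Finset.univ.inf' _ (fun i => G.dist (s' i) u)
      ≤ G.dist (s' j) u := Finset.inf'_le _ (Finset.mem_univ j)
    _ ≤ (M j).sup (fun z => G.dist (s' j) z) := Finset.le_sup hj
    _ ≤ (M j).sup (fun z => G.dist (s j) z) := hJordan j (s j)
    _ ≤ Vi.sup (fun u => Finset.univ.inf'
          (Finset.univ_nonempty_iff.mpr ⟨⟨0, hk⟩⟩) (fun i => G.dist (s i) u)) := by
        apply Finset.sup_le
        intro z hz
        obtain ⟨hzVi, hmin⟩ := hVoronoi j z hz
        have h1 : G.dist (s j) z ≤ Finset.univ.inf' (Finset.univ_nonempty_iff.mpr ⟨⟨0, hk⟩⟩)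
            (fun i => G.dist (s i) z) :=
          Finset.le_inf' _ _ (fun i _ => hmin i)
        exact le_trans h1 (Finset.le_sup (f := fun u => Finset.univ.inf'
          (Finset.univ_nonempty_iff.mpr ⟨⟨0, hk⟩⟩) (fun i => G.dist (s i) u)) hzVi)
end

section
/- Let G be a connected graph, V_i a nonempty finite vertex set, and u ∈ V_i with nearest source s_j in a set S = {s_1,...,s_k}. If s'_j is a Jordan center of the Voronoi set M_j containing u, then d(s'_j, u) ≤ max_{z ∈ M_j} d(s_j, z) ≤ d̄(S, V_i). -/
/-- key chain of inequalities in the proof of Proposition 4.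
If u ∈ V_i has nearest source s_j, M_j is the Voronoi set of s_j containing u,
and s'_j is a Jordan center of M_j, then
d(s'_j, u) ≤ max_{z ∈ M_j} d(s_j, z) ≤ d̄(S, V_i). -/
theorem mjc_key_chain {V : Type*} (G : SimpleGraph V) (hG : G.Connected)
    (Vi : Finset V) (hVi : Vi.Nonempty)
    {k : ℕ} (hk : 0 < k) (s : Fin k → V) (j : Fin k)
    (u : V) (hu : u ∈ Vi)
    (hnear : ∀ i, G.dist (s j) u ≤ G.dist (s i) u)
    (M : Finset V) (huM : u ∈ M)
    (hVoronoi : ∀ z ∈ M, z ∈ Vi ∧ ∀ i, G.dist (s j) z ≤ G.dist (s i) z)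
    (s'j : V)
    (hJordan : ∀ w : V,
      M.sup (fun z => G.dist s'j z) ≤ M.sup (fun z => G.dist w z)) :
    G.dist s'j u ≤ M.sup (fun z => G.dist (s j) z) ∧
      M.sup (fun z => G.dist (s j) z) ≤
        Vi.sup (fun x =>
          Finset.univ.inf' (Finset.univ_nonempty_iff.mpr ⟨⟨0, hk⟩⟩)
            (fun i => G.dist (s i) x)) := by
  constructor
  · exact le_trans (Finset.le_sup (f := fun z => G.dist s'j z) huM) (hJordan (s j))
  · apply Finset.sup_le
    intro z hz
    obtain ⟨hzVi, hzle⟩ := hVoronoi z hz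
    refine le_trans ?_ (Finset.le_sup (f := fun x =>
      Finset.univ.inf' (Finset.univ_nonempty_iff.mpr ⟨⟨0, hk⟩⟩)
        (fun i => G.dist (s i) x)) hzVi)
    exact Finset.le_inf' _ _ (fun i _ => hzle i)
end

section
/- On a tree T with finite nonempty vertex set V_i, every vertex u that is not a Jordan center of V_i (i.e., d̄(u, V_i) > min_w d̄(w, V_i)) has a neighbor v with d̄(v, V_i) = d̄(u, V_i) - 1. -/
/-!
Let `v` be the first step on the path from `u` to a vertex `w` of smaller eccentricity. Every
`x ∈ Vi` is either on `v`'s side of the edge `uv`, where it is one step closer to `v` than to `u`,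
or on `u`'s side, where the tree path from `x` to `w` runs through `v`, so
`d(v, x) ≤ d(w, x) < d̄(u, Vi)`. Hence `d̄(v, Vi) < d̄(u, Vi)`, and moving along one edge
changes the eccentricity by at most one.
-/

namespace SimpleGraph

variable {V : Type*} {G : SimpleGraph V}

lemma Reachable.exists_adj_dist_eq_add_one {u w : V} (hr : G.Reachable u w) (hne : u ≠ w) :
    ∃ v, G.Adj u v ∧ G.dist u w = G.dist v w + 1 := by
  obtain ⟨p, hp⟩ := hr.exists_walk_length_eq_dist
  cases p with
  | nil => exact absurd rfl hne
  | @cons _ v _ h q =>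
    refine ⟨v, h, le_antisymm ?_ ?_⟩
    · calc G.dist u w ≤ G.dist u v + G.dist v w := h.reachable.dist_triangle_left w
        _ = G.dist v w + 1 := by rw [dist_eq_one_iff_adj.mpr h, add_comm]
    · simpa [← hp] using dist_le q

lemma IsAcyclic.length_eq_dist_of_isPath (hG : G.IsAcyclic) {u v : V} {p : G.Walk u v}
    (hp : p.IsPath) : p.length = G.dist u v := by
  obtain ⟨q, hq, hlen⟩ := p.reachable.exists_path_of_dist
  rw [← hlen, Subtype.mk.inj ((hG.subsingleton_path u v).elim ⟨p, hp⟩ ⟨q, hq⟩)]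

-- In a forest a walk is a path as soon as consecutive edges differ.
lemma IsAcyclic.isPath_append_cons (hG : G.IsAcyclic) {x u v w : V} {p : G.Walk x u}
    {q : G.Walk v w} (h : G.Adj u v) (hp : (p.concat h).IsPath) (hq : (Walk.cons h q).IsPath) :
    (p.append (Walk.cons h q)).IsPath := by
  rw [hG.isPath_iff_isChain] at hp hq ⊢
  rw [Walk.edges_concat, List.concat_eq_append, List.isChain_append] at hp
  rw [Walk.edges_append]
  exact hp.1.append hq (by simpa using hp.2.2)

lemma IsTree.dist_eq_dist_add_dist_of_adj (hG : G.IsTree) {u v x w : V} (h : G.Adj u v)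
    (hx : G.dist x v = G.dist x u + 1) (hw : G.dist u w = G.dist v w + 1) :
    G.dist x w = G.dist x v + G.dist v w := by
  obtain ⟨p, hp⟩ := hG.connected.exists_walk_length_eq_dist x u
  obtain ⟨q, hq⟩ := hG.connected.exists_walk_length_eq_dist v w
  have hpv : (p.concat h).IsPath := (p.concat h).isPath_of_length_eq_dist (by simp [hp, hx])
  have hqu : (Walk.cons h q).IsPath := (Walk.cons h q).isPath_of_length_eq_dist (by simp [hq, hw])
  rw [← hG.isAcyclic.length_eq_dist_of_isPath (hG.isAcyclic.isPath_append_cons h hpv hqu)]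
  rw [Walk.length_append, Walk.length_cons, hp, hq, hx]
  omega

lemma Connected.sup_dist_le_sup_dist_add_one (hG : G.Connected) {u v : V} (h : G.Adj u v)
    (s : Finset V) : s.sup (G.dist u) ≤ s.sup (G.dist v) + 1 :=
  Finset.sup_le fun x hx => calc
    G.dist u x ≤ G.dist u v + G.dist v x := hG.dist_triangle
    _ ≤ s.sup (G.dist v) + 1 := by
      rw [dist_eq_one_iff_adj.mpr h, add_comm]
      exact Nat.add_le_add_right (Finset.le_sup hx) 1

lemma IsTree.sup_dist_lt_of_adj (hG : G.IsTree) {u v w : V} (h : G.Adj u v)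
    (hw : G.dist u w = G.dist v w + 1) {s : Finset V} (hlt : s.sup (G.dist w) < s.sup (G.dist u)) :
    s.sup (G.dist v) < s.sup (G.dist u) := by
  refine (Finset.sup_lt_iff (bot_le.trans_lt hlt)).mpr fun x hx => ?_
  rcases hG.dist_eq_dist_add_one_of_adj x h with hxu | hxv
  · calc G.dist v x < G.dist u x := by rw [dist_comm, dist_comm (u := u), hxu]; omega
      _ ≤ s.sup (G.dist u) := Finset.le_sup hx
  · calc G.dist v x ≤ G.dist x w := by
          rw [hG.dist_eq_dist_add_dist_of_adj h hxv hw, dist_comm]; omega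
      _ ≤ s.sup (G.dist w) := by rw [dist_comm]; exact Finset.le_sup hx
      _ < s.sup (G.dist u) := hlt

end SimpleGraph

theorem infection_range_descent_general {V : Type*} (T : SimpleGraph V)
    (hT : T.IsTree) (Vi : Finset V) (u : V)
    (hu : ∃ w : V, Vi.sup (fun x => T.dist w x) < Vi.sup (fun x => T.dist u x)) :
    ∃ v : V, T.Adj u v ∧
      Vi.sup (fun x => T.dist v x) = Vi.sup (fun x => T.dist u x) - 1 := by
  obtain ⟨w, hw⟩ := hu
  have hne : u ≠ w := by rintro rfl; exact hw.false
  obtain ⟨v, huv, hvw⟩ := (hT.connected u w).exists_adj_dist_eq_add_one hne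
  have hlt : Vi.sup (fun x => T.dist v x) < Vi.sup (fun x => T.dist u x) :=
    hT.sup_dist_lt_of_adj huv hvw hw
  have hle : Vi.sup (fun x => T.dist u x) ≤ Vi.sup (fun x => T.dist v x) + 1 :=
    hT.connected.sup_dist_le_sup_dist_add_one huv Vi
  exact ⟨v, huv, by omega⟩

/-- descent property of the infection range on a tree: every
vertex u that is not a Jordan center of V_i has a neighbor v with
d̄(v, V_i) = d̄(u, V_i) - 1. -/
theorem infection_range_descent {V : Type*} (T : SimpleGraph V)
    (hT : T.IsTree) (Vi : Finset V) (hVi : Vi.Nonempty) (u : V)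
    (hu : ∃ w : V, Vi.sup (fun x => T.dist w x) < Vi.sup (fun x => T.dist u x)) :
    ∃ v : V, T.Adj u v ∧
      Vi.sup (fun x => T.dist v x) = Vi.sup (fun x => T.dist u x) - 1 :=
  infection_range_descent_general T hT Vi u hu
end
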